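/- arXiv:1802.00562 — 3 statements merged into one kernel-verified Lean document; each statement's English description precedes it below -/
import Mathlib

section
/- For every integer N ≥ 1, h = 1/N and every z ∈ [0,1], the vector (C̊_0(z),…,C̊_N(z)) is the unique minimizer of the quadratic form Q_1(C) = −( Σ_{β=0}^N Σ_{γ=0}^N C_β C_γ G_1(hβ − hγ) − 2 Σ_{β=0}^N C_β G_1(z − hβ) ) over all vectors C = (C_0,…,C_N) ∈ ℝ^{N+1} satisfying the constraint Σ_{β=0}^N C_β e^{−hβ} = e^{−z}. (Q_1(C) equals the squared norm of the error functional of the interpolation formula with coefficients C in the space W_2^{(1,0)}(0,1).) -/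
/-!
After simplification `C̊_β(z) = sinh (h - |z - hβ|)₊ / sinh h` is a hyperbolic hat function,
supported on the two nodes `a = hα ≤ z ≤ a + h` around `z`. On `[a, a + h]` these two weights
reproduce every combination of `eˣ` and `e⁻ˣ` exactly; since `e⁻ˣ` and, for each node `y`,
`x ↦ G₁(x - y)` are such combinations there, `C̊` satisfies the constraint and the stationarity
equations `Σ_γ C̊_γ G₁(hβ - hγ) = G₁(z - hβ)`. Writing `G₁(x) = (cosh x - e^{-|x|})/2`, the
`cosh` part of the quadratic form factors through the constraint, so for feasible `C = C̊ + D`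
`Q₁(C) = Q₁(C̊) + ½ Σ D_β D_γ e^{-|hβ - hγ|}`. Finally `e^{-|x-y|} = e^{-x} e^{-y} e^{2 min(x,y)}`,
and Abel summation over the increasing nodes writes the quadratic form of the kernel
`f (min i j)` (with `f` increasing and positive) as a positive combination of squares of tail
sums, which makes it positive definite.
-/

/-- `G₁(x) = sgn(x)·(eˣ − e⁻ˣ)/4`, with `sgn 0 = 0`. -/
noncomputable def G1 (x : ℝ) : ℝ := Real.sign x * (Real.exp x - Real.exp (-x)) / 4

/-- The optimal coefficients `C̊_β(z)` of the optimal interpolation formula in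
`W₂^{(1,0)}(0,1)` with equally spaced nodes `x_β = βh`, `h = 1/N`. -/
noncomputable def optC1 (N : ℕ) (z : ℝ) (β : ℕ) : ℝ :=
  let h : ℝ := 1 / N;
  1 / (2 * (1 - Real.exp (2 * h))) *
    (Real.sign (z - h * β - h) * (Real.exp (h * β + 2 * h - z) - Real.exp (z - h * β))
      + Real.sign (z - h * β + h) * (Real.exp (h * β - z) - Real.exp (z - h * β + 2 * h))
      + (1 + Real.exp (2 * h)) * Real.sign (z - h * β) *
          (Real.exp (z - h * β) - Real.exp (h * β - z)))

/-- The quadratic form `Q₁(C) = −(Σ_β Σ_γ C_β C_γ G₁(hβ−hγ) − 2 Σ_β C_β G₁(z−hβ))`,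
the squared norm of the error functional in `W₂^{(1,0)*}(0,1)`. -/
noncomputable def Q1 (N : ℕ) (z : ℝ) (C : ℕ → ℝ) : ℝ :=
  let h : ℝ := 1 / N;
  -((∑ β ∈ Finset.range (N + 1), (∑ γ ∈ Finset.range (N + 1),
        C β * C γ * G1 (h * β - h * γ)))
    - 2 * ∑ β ∈ Finset.range (N + 1), C β * G1 (z - h * β))

open Real Finset

theorem sum_sum_mul_mul_apply_min (f u : ℕ → ℝ) (n : ℕ) :
    ∑ i ∈ range (n + 1), ∑ j ∈ range (n + 1), u i * u j * f (min i j) =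
      f 0 * (∑ i ∈ range (n + 1), u i) ^ 2 +
        ∑ k ∈ range n, (f (k + 1) - f k) * (∑ i ∈ Ico (k + 1) (n + 1), u i) ^ 2 := by
  set v : ℕ → ℕ → ℝ := fun k i => if k < i then u i else 0
  have hv (k : ℕ) : ∑ i ∈ range (n + 1), v k i = ∑ i ∈ Ico (k + 1) (n + 1), u i := by
    rw [← sum_filter]
    congr 1
    ext i
    simp only [mem_filter, mem_range, mem_Ico]
    omega
  have hmin {i j : ℕ} (hi : i ∈ range (n + 1)) (hj : j ∈ range (n + 1)) :
      u i * u j * f (min i j) =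
        f 0 * (u i * u j) + ∑ k ∈ range n, (f (k + 1) - f k) * (v k i * v k j) := by
    have htel : f (min i j) = f 0 + ∑ k ∈ range n with k < min i j, (f (k + 1) - f k) := by
      have : (range n).filter (· < min i j) = range (min i j) := by
        ext k
        simp only [mem_filter, mem_range] at hi hj ⊢
        omega
      rw [this, sum_range_sub]
      ring
    rw [htel, sum_filter, mul_add, mul_sum]
    congr 1
    · ring
    · refine sum_congr rfl fun k _ => ?_
      simp only [v, ite_zero_mul_ite_zero, lt_min_iff]
      split_ifs <;> ring
  calc
    _ = ∑ i ∈ range (n + 1), ∑ j ∈ range (n + 1),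
          (f 0 * (u i * u j) + ∑ k ∈ range n, (f (k + 1) - f k) * (v k i * v k j)) :=
      sum_congr rfl fun i hi => sum_congr rfl fun j hj => hmin hi hj
    _ = f 0 * ∑ i ∈ range (n + 1), ∑ j ∈ range (n + 1), u i * u j +
          ∑ k ∈ range n, (f (k + 1) - f k) *
            ∑ i ∈ range (n + 1), ∑ j ∈ range (n + 1), v k i * v k j := by
      simp only [sum_add_distrib, mul_sum]
      exact congrArg _ ((sum_congr rfl fun i _ => sum_comm).trans sum_comm)
    _ = _ := by
      simp only [← sum_mul_sum, hv, sq]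

theorem sum_sum_mul_mul_apply_min_nonneg {f : ℕ → ℝ} (hf₀ : 0 ≤ f 0) (hf : Monotone f)
    (u : ℕ → ℝ) (n : ℕ) :
    0 ≤ ∑ i ∈ range (n + 1), ∑ j ∈ range (n + 1), u i * u j * f (min i j) := by
  rw [sum_sum_mul_mul_apply_min]
  exact add_nonneg (by positivity)
    (sum_nonneg fun k _ => mul_nonneg (sub_nonneg.2 (hf k.le_succ)) (sq_nonneg _))

theorem eq_zero_of_sum_sum_mul_mul_apply_min_eq_zero {f : ℕ → ℝ} (hf₀ : 0 < f 0)
    (hf : StrictMono f) {u : ℕ → ℝ} {n : ℕ}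
    (hu : ∑ i ∈ range (n + 1), ∑ j ∈ range (n + 1), u i * u j * f (min i j) = 0) :
    ∀ i ≤ n, u i = 0 := by
  have hΔ (k : ℕ) : 0 < f (k + 1) - f k := sub_pos.2 (hf (Nat.lt_succ_self k))
  have hterm (k : ℕ) : 0 ≤ (f (k + 1) - f k) * (∑ i ∈ Ico (k + 1) (n + 1), u i) ^ 2 := by
    have := hΔ k
    positivity
  rw [sum_sum_mul_mul_apply_min,
    add_eq_zero_iff_of_nonneg (by positivity) (sum_nonneg fun k _ => hterm k),
    sum_eq_zero_iff_of_nonneg fun k _ => hterm k] at hu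
  have htail : ∀ k ≤ n + 1, ∑ i ∈ Ico k (n + 1), u i = 0 := by
    rintro (_ | k) hk
    · rw [← Finset.range_eq_Ico]
      exact pow_eq_zero_iff two_ne_zero |>.1 ((mul_eq_zero.1 hu.1).resolve_left hf₀.ne')
    · obtain hkn | rfl := (Nat.succ_le_succ_iff.1 hk).lt_or_eq
      · simpa [(hΔ k).ne'] using hu.2 k (mem_range.2 hkn)
      · simp
  intro i hi
  have := sum_eq_sum_Ico_succ_bot (Nat.lt_succ_of_le hi) u
  rw [htail i (by omega), htail (i + 1) (by omega)] at this
  linarith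

theorem Monotone.exp_neg_abs_sub {x : ℕ → ℝ} (hx : Monotone x) (i j : ℕ) :
    exp (-|x i - x j|) = exp (-x i) * exp (-x j) * exp (2 * x (min i j)) := by
  rw [hx.map_min, ← exp_add, ← exp_add]
  congr 1
  rcases le_total (x i) (x j) with h | h
  · rw [abs_of_nonpos (sub_nonpos.2 h), min_eq_left h]; ring
  · rw [abs_of_nonneg (sub_nonneg.2 h), min_eq_right h]; ring

theorem Monotone.sum_sum_mul_mul_exp_neg_abs_sub_eq {x : ℕ → ℝ} (hx : Monotone x)
    (v : ℕ → ℝ) (n : ℕ) :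
    ∑ i ∈ range (n + 1), ∑ j ∈ range (n + 1), v i * v j * exp (-|x i - x j|) =
      ∑ i ∈ range (n + 1), ∑ j ∈ range (n + 1),
        (v i * exp (-x i)) * (v j * exp (-x j)) * exp (2 * x (min i j)) := by
  refine sum_congr rfl fun i _ => sum_congr rfl fun j _ => ?_
  rw [hx.exp_neg_abs_sub]
  ring

theorem Monotone.sum_sum_mul_mul_exp_neg_abs_sub_nonneg {x : ℕ → ℝ} (hx : Monotone x)
    (v : ℕ → ℝ) (n : ℕ) :
    0 ≤ ∑ i ∈ range (n + 1), ∑ j ∈ range (n + 1), v i * v j * exp (-|x i - x j|) := by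
  rw [hx.sum_sum_mul_mul_exp_neg_abs_sub_eq]
  exact sum_sum_mul_mul_apply_min_nonneg (exp_pos _).le
    (exp_monotone.comp (hx.const_mul zero_le_two)) _ n

theorem StrictMono.eq_zero_of_sum_sum_mul_mul_exp_neg_abs_sub_eq_zero {x : ℕ → ℝ}
    (hx : StrictMono x) {v : ℕ → ℝ} {n : ℕ}
    (hv : ∑ i ∈ range (n + 1), ∑ j ∈ range (n + 1), v i * v j * exp (-|x i - x j|) = 0) :
    ∀ i ≤ n, v i = 0 := by
  rw [hx.monotone.sum_sum_mul_mul_exp_neg_abs_sub_eq] at hv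
  intro i hi
  have := eq_zero_of_sum_sum_mul_mul_apply_min_eq_zero (exp_pos _)
    (exp_strictMono.comp (hx.const_mul two_pos)) hv i hi
  simpa [exp_ne_zero] using this

theorem neg_sum_sum_sub_two_mul_sum_eq_of_stationary {ι : Type*} (s : Finset ι)
    {K : ι → ι → ℝ} (hK : ∀ i j, K i j = K j i) {r c : ι → ℝ}
    (hc : ∀ i ∈ s, ∑ j ∈ s, c j * K i j = r i) (C : ι → ℝ) :
    -(∑ i ∈ s, ∑ j ∈ s, C i * C j * K i j - 2 * ∑ i ∈ s, C i * r i) =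
      -(∑ i ∈ s, ∑ j ∈ s, c i * c j * K i j - 2 * ∑ i ∈ s, c i * r i) -
        ∑ i ∈ s, ∑ j ∈ s, (C i - c i) * (C j - c j) * K i j := by
  have hcross : ∑ i ∈ s, ∑ j ∈ s, (C i - c i) * c j * K i j = ∑ i ∈ s, (C i - c i) * r i :=
    sum_congr rfl fun i hi => by simp only [← hc i hi, mul_sum, mul_assoc]
  have hcross' : ∑ i ∈ s, ∑ j ∈ s, c i * (C j - c j) * K i j = ∑ i ∈ s, (C i - c i) * r i := by
    rw [sum_comm, ← hcross]
    exact sum_congr rfl fun i _ => sum_congr rfl fun j _ => by rw [hK]; ring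
  have hquad : ∑ i ∈ s, ∑ j ∈ s, C i * C j * K i j =
      ∑ i ∈ s, ∑ j ∈ s, c i * c j * K i j + ∑ i ∈ s, ∑ j ∈ s, (C i - c i) * c j * K i j +
        ∑ i ∈ s, ∑ j ∈ s, c i * (C j - c j) * K i j +
        ∑ i ∈ s, ∑ j ∈ s, (C i - c i) * (C j - c j) * K i j := by
    simp only [← sum_add_distrib]
    exact sum_congr rfl fun i _ => sum_congr rfl fun j _ => by ring
  have hlin : ∑ i ∈ s, C i * r i = ∑ i ∈ s, c i * r i + ∑ i ∈ s, (C i - c i) * r i := by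
    rw [← sum_add_distrib]
    exact sum_congr rfl fun i _ => by ring
  rw [hquad, hcross, hcross', hlin]
  ring

theorem Real.sign_mul_sinh (x : ℝ) : sign x * sinh x = sinh |x| := by
  rcases lt_trichotomy x 0 with hx | rfl | hx
  · rw [sign_of_neg hx, abs_of_neg hx, sinh_neg, neg_one_mul]
  · simp
  · rw [sign_of_pos hx, abs_of_pos hx, one_mul]

theorem Real.sign_mul_exp_sub_exp (h x : ℝ) :
    sign x * (exp (h - x) - exp (h + x)) = -(2 * exp h * sinh |x|) := by
  rw [← sign_mul_sinh, sinh_eq, sub_eq_add_neg h, exp_add, exp_add]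
  ring

theorem G1_eq_sinh_abs (x : ℝ) : G1 x = sinh |x| / 2 := by
  have := sign_mul_exp_sub_exp 0 x
  rw [zero_sub, zero_add, exp_zero] at this
  rw [G1]
  linarith

theorem G1_sub_comm (x y : ℝ) : G1 (x - y) = G1 (y - x) := by
  rw [G1_eq_sinh_abs, G1_eq_sinh_abs, abs_sub_comm]

theorem G1_eq_cosh_sub_exp_neg_abs (x : ℝ) : G1 x = (cosh x - exp (-|x|)) / 2 := by
  rw [G1_eq_sinh_abs, ← cosh_sub_sinh, cosh_abs, sub_sub_cancel]

theorem sum_sum_mul_mul_G1_sub_of_sum_mul_exp_neg_eq_zero {ι : Type*} (s : Finset ι)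
    (x v : ι → ℝ) (hv : ∑ i ∈ s, v i * exp (-x i) = 0) :
    ∑ i ∈ s, ∑ j ∈ s, v i * v j * G1 (x i - x j) =
      -(∑ i ∈ s, ∑ j ∈ s, v i * v j * exp (-|x i - x j|)) / 2 := by
  calc
    _ = ∑ i ∈ s, ∑ j ∈ s, ((v i * exp (x i)) * (v j * exp (-x j)) / 4 +
          (v i * exp (-x i)) * (v j * exp (x j)) / 4 - v i * v j * exp (-|x i - x j|) / 2) := by
      refine sum_congr rfl fun i _ => sum_congr rfl fun j _ => ?_
      rw [G1_eq_cosh_sub_exp_neg_abs, cosh_eq, neg_sub, exp_sub, exp_sub]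
      simp only [exp_neg]
      field_simp
      ring
    _ = (∑ i ∈ s, v i * exp (x i)) * (∑ j ∈ s, v j * exp (-x j)) / 4 +
          (∑ i ∈ s, v i * exp (-x i)) * (∑ j ∈ s, v j * exp (x j)) / 4 -
          (∑ i ∈ s, ∑ j ∈ s, v i * v j * exp (-|x i - x j|)) / 2 := by
      simp only [sum_mul_sum, sum_add_distrib, sum_sub_distrib, sum_div]
    _ = _ := by
      rw [hv]
      ring

theorem G1_sub_of_le {w y : ℝ} (h : y ≤ w) :
    G1 (w - y) = exp (-y) / 4 * exp w + -exp y / 4 * exp (-w) := by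
  rw [G1_eq_sinh_abs, abs_of_nonneg (sub_nonneg.2 h), sinh_eq, neg_sub, exp_sub, exp_sub,
    exp_neg, exp_neg]
  field_simp
  ring

theorem G1_sub_of_ge {w y : ℝ} (h : w ≤ y) :
    G1 (w - y) = -exp (-y) / 4 * exp w + exp y / 4 * exp (-w) := by
  rw [G1_eq_sinh_abs, abs_of_nonpos (sub_nonpos.2 h), sinh_eq, neg_neg, neg_sub, exp_sub, exp_sub,
    exp_neg, exp_neg]
  field_simp
  ring

theorem exp_comb_mul_sinh_interp (p q a h t : ℝ) :
    (p * exp a + q * exp (-a)) * sinh (h - t) + (p * exp (a + h) + q * exp (-(a + h))) * sinh t =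
      (p * exp (a + t) + q * exp (-(a + t))) * sinh h := by
  simp only [sinh_eq, neg_add, neg_sub, exp_add, exp_sub, exp_neg]
  field_simp
  ring

theorem G1_sub_mul_sinh_interp {a h t y : ℝ} (hy : y ≤ a ∨ a + h ≤ y) (ht₀ : 0 ≤ t)
    (ht : t ≤ h) :
    G1 (a - y) * sinh (h - t) + G1 (a + h - y) * sinh t = G1 (a + t - y) * sinh h := by
  rcases hy with hy | hy
  · rw [G1_sub_of_le hy, G1_sub_of_le (by linarith), G1_sub_of_le (by linarith)]
    exact exp_comb_mul_sinh_interp ..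
  · rw [G1_sub_of_ge (by linarith), G1_sub_of_ge hy, G1_sub_of_ge (by linarith)]
    exact exp_comb_mul_sinh_interp ..

theorem sinh_abs_central_difference {h : ℝ} (hh : 0 ≤ h) (u : ℝ) :
    sinh |u - h| + sinh |u + h| - 2 * cosh h * sinh |u| = 2 * sinh (max (h - |u|) 0) := by
  wlog hu : 0 ≤ u generalizing u
  · have := this (-u) (by linarith)
    rwa [show -u - h = -(u + h) by ring, show -u + h = -(u - h) by ring, abs_neg, abs_neg,
      abs_neg, add_comm (sinh _)] at this
  rw [abs_of_nonneg hu, abs_of_nonneg (by linarith : 0 ≤ u + h)]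
  rcases le_total h u with hhu | huh
  · rw [abs_of_nonneg (sub_nonneg.2 hhu), max_eq_right (sub_nonpos.2 hhu), sinh_sub, sinh_add]
    simp only [sinh_zero]
    ring
  · rw [abs_of_nonpos (sub_nonpos.2 huh), max_eq_left (sub_nonneg.2 huh), neg_sub, sinh_sub,
      sinh_add]
    ring

noncomputable def sinhHat (h u : ℝ) : ℝ := sinh (max (h - |u|) 0) / sinh h

theorem sinhHat_of_le_abs {h u : ℝ} (hu : h ≤ |u|) : sinhHat h u = 0 := by
  rw [sinhHat, max_eq_right (sub_nonpos.2 hu), sinh_zero, zero_div]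

theorem sinhHat_of_abs_le {h u : ℝ} (hu : |u| ≤ h) : sinhHat h u = sinh (h - |u|) / sinh h := by
  rw [sinhHat, max_eq_left (sub_nonneg.2 hu)]

theorem optC1_eq_sinhHat {N : ℕ} (hN : 0 < N) (z : ℝ) (β : ℕ) :
    optC1 N z β = sinhHat (1 / N) (z - 1 / N * β) := by
  set h : ℝ := 1 / N with hh_def
  have hh : 0 < h := by positivity
  have key := sinh_abs_central_difference hh.le (z - h * β)
  have hs : sinh h ≠ 0 := (sinh_pos_iff.2 hh).ne'
  have he : 1 - exp h ^ 2 ≠ 0 := by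
    have : 1 < exp h := one_lt_exp_iff.2 hh
    nlinarith
  have hA : sign (z - h * β - h) * (exp (h * β + 2 * h - z) - exp (z - h * β)) =
      -(2 * exp h * sinh |z - h * β - h|) := by
    rw [← sign_mul_exp_sub_exp]; ring_nf
  have hB : sign (z - h * β + h) * (exp (h * β - z) - exp (z - h * β + 2 * h)) =
      -(2 * exp h * sinh |z - h * β + h|) := by
    rw [← sign_mul_exp_sub_exp]; ring_nf
  have hC : sign (z - h * β) * (exp (z - h * β) - exp (h * β - z)) = 2 * sinh |z - h * β| := by
    rw [← sign_mul_sinh, sinh_eq, neg_sub]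
    ring
  have h2 : exp (2 * h) = exp h * exp h := by rw [← exp_add, two_mul]
  rw [sinhHat, optC1, ← hh_def, mul_assoc _ (sign _), hA, hB, hC, eq_div_iff hs,
    show sinh (max (h - |z - h * β|) 0) = (sinh |z - h * β - h| + sinh |z - h * β + h|
      - 2 * cosh h * sinh |z - h * β|) / 2 by linarith, sinh_eq h, cosh_eq h,
    exp_neg, h2]
  field_simp
  ring

theorem exists_nat_mul_le_le_mul_add {h z : ℝ} (hh : 0 < h) {n : ℕ} (hn : 0 < n)
    (hz₀ : 0 ≤ z) (hz₁ : z ≤ n * h) : ∃ α < n, h * α ≤ z ∧ z ≤ h * α + h := by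
  obtain hlt | hge := lt_or_ge ⌊z / h⌋₊ n
  · refine ⟨_, hlt, ?_, ?_⟩
    · rw [mul_comm, ← le_div_iff₀ hh]
      exact Nat.floor_le (div_nonneg hz₀ hh.le)
    · rw [mul_comm, ← add_one_mul, ← div_le_iff₀ hh]
      exact (Nat.lt_floor_add_one _).le
  · refine ⟨n - 1, by omega, ?_, ?_⟩
    · rw [Nat.cast_sub hn, Nat.cast_one]
      have : (n : ℝ) ≤ z / h :=
        le_trans (by exact_mod_cast hge) (Nat.floor_le (div_nonneg hz₀ hh.le))
      rw [le_div_iff₀ hh] at this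
      nlinarith
    · rw [Nat.cast_sub hn, Nat.cast_one]
      nlinarith

theorem sum_sinhHat_mul {h z : ℝ} {n α : ℕ} (hα : α < n) (hz₀ : h * α ≤ z)
    (hz₁ : z ≤ h * α + h) (F : ℕ → ℝ) :
    ∑ γ ∈ range (n + 1), sinhHat h (z - h * γ) * F γ =
      (F α * sinh (h - (z - h * α)) + F (α + 1) * sinh (z - h * α)) / sinh h := by
  have hh : 0 ≤ h := by linarith
  rw [sum_eq_add_of_mem α (α + 1) (by simp; omega) (by simp; omega) (by omega)]
  · rw [sinhHat_of_abs_le (by rw [abs_of_nonneg (by linarith)]; linarith),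
      sinhHat_of_abs_le (by rw [abs_le]; push_cast; constructor <;> linarith),
      abs_of_nonneg (by linarith), abs_of_nonpos (by push_cast; linarith)]
    push_cast
    rw [show h - -(z - h * (α + 1)) = z - h * α by ring]
    ring
  · intro γ _ ⟨hγα, hγα₁⟩
    rw [sinhHat_of_le_abs, zero_mul]
    rcases Nat.lt_or_gt_of_ne hγα with hγ | hγ
    · have : (γ : ℝ) + 1 ≤ α := by exact_mod_cast hγ
      rw [abs_of_nonneg (by nlinarith)]
      nlinarith
    · have : (α : ℝ) + 2 ≤ γ := by exact_mod_cast (by omega : α + 2 ≤ γ)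
      rw [abs_of_nonpos (by nlinarith)]
      nlinarith

theorem sum_sinhHat_mul_exp_neg {h z : ℝ} (hh : 0 < h) {n α : ℕ} (hα : α < n)
    (hz₀ : h * α ≤ z) (hz₁ : z ≤ h * α + h) :
    ∑ γ ∈ range (n + 1), sinhHat h (z - h * γ) * exp (-(h * γ)) = exp (-z) := by
  rw [sum_sinhHat_mul hα hz₀ hz₁, div_eq_iff (sinh_pos_iff.2 hh).ne']
  have := exp_comb_mul_sinh_interp 0 1 (h * α) h (z - h * α)
  push_cast
  simpa [mul_add] using this

theorem sum_sinhHat_mul_G1 {h z : ℝ} (hh : 0 < h) {n α : ℕ} (hα : α < n)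
    (hz₀ : h * α ≤ z) (hz₁ : z ≤ h * α + h) (β : ℕ) :
    ∑ γ ∈ range (n + 1), sinhHat h (z - h * γ) * G1 (h * β - h * γ) = G1 (z - h * β) := by
  rw [sum_sinhHat_mul hα hz₀ hz₁, div_eq_iff (sinh_pos_iff.2 hh).ne']
  simp only [G1_sub_comm (h * β)]
  push_cast
  have hside : h * β ≤ h * α ∨ h * α + h ≤ h * β := by
    rcases le_or_gt β α with hβ | hβ
    · exact Or.inl (by gcongr)
    · right
      have : (α : ℝ) + 1 ≤ β := by exact_mod_cast hβ
      nlinarith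
  have := G1_sub_mul_sinh_interp hside (sub_nonneg.2 hz₀) (by linarith : z - h * α ≤ h)
  simpa [mul_add, add_sub_cancel] using this

section

variable {N : ℕ} {z : ℝ}

theorem sum_optC1_mul_exp_neg (hN : 1 ≤ N) (hz : z ∈ Set.Icc (0 : ℝ) 1) :
    ∑ β ∈ range (N + 1), optC1 N z β * exp (-((1 / N : ℝ) * β)) = exp (-z) := by
  have hh : (0 : ℝ) < 1 / N := by positivity
  obtain ⟨α, hα, hz₀, hz₁⟩ := exists_nat_mul_le_le_mul_add hh hN hz.1 (by field_simp; exact hz.2)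
  simp only [optC1_eq_sinhHat hN]
  exact sum_sinhHat_mul_exp_neg hh hα hz₀ hz₁

theorem sum_optC1_mul_G1 (hN : 1 ≤ N) (hz : z ∈ Set.Icc (0 : ℝ) 1) (β : ℕ) :
    ∑ γ ∈ range (N + 1), optC1 N z γ * G1 (1 / N * β - 1 / N * γ) = G1 (z - 1 / N * β) := by
  have hh : (0 : ℝ) < 1 / N := by positivity
  obtain ⟨α, hα, hz₀, hz₁⟩ := exists_nat_mul_le_le_mul_add hh hN hz.1 (by field_simp; exact hz.2)
  simp only [optC1_eq_sinhHat hN]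
  exact sum_sinhHat_mul_G1 hh hα hz₀ hz₁ β

theorem Q1_eq_Q1_optC1_add (hN : 1 ≤ N) (hz : z ∈ Set.Icc (0 : ℝ) 1) {C : ℕ → ℝ}
    (hC : ∑ β ∈ range (N + 1), C β * exp (-((1 / N : ℝ) * β)) = exp (-z)) :
    Q1 N z C = Q1 N z (optC1 N z) +
      (∑ β ∈ range (N + 1), ∑ γ ∈ range (N + 1), (C β - optC1 N z β) * (C γ - optC1 N z γ) *
        exp (-|(1 / N : ℝ) * β - 1 / N * γ|)) / 2 := by
  have hD : ∑ β ∈ range (N + 1), (C β - optC1 N z β) * exp (-((1 / N : ℝ) * β)) = 0 := by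
    simp only [sub_mul, sum_sub_distrib, hC, sum_optC1_mul_exp_neg hN hz, sub_self]
  rw [Q1, Q1, neg_sum_sum_sub_two_mul_sum_eq_of_stationary _
      (fun β γ => G1_sub_comm _ _) fun β _ => sum_optC1_mul_G1 hN hz β,
    sum_sum_mul_mul_G1_sub_of_sum_mul_exp_neg_eq_zero _ (fun β : ℕ => 1 / N * (β : ℝ)) _ hD]
  ring

end

/-- For every `N ≥ 1`, `h = 1/N` and every `z ∈ [0,1]`, the vector `(C̊_0(z),…,C̊_N(z))` is
the unique minimizer of `Q₁` over all vectors satisfying `Σ_β C_β e^{−hβ} = e^{−z}`: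
it is feasible, minimizes `Q₁` among feasible vectors, and any feasible minimizer agrees
with it in all coordinates `β ≤ N`. -/
theorem optC1_unique_minimizer (N : ℕ) (hN : 1 ≤ N) (z : ℝ)
    (hz : z ∈ Set.Icc (0 : ℝ) 1) :
    (∑ β ∈ Finset.range (N + 1), optC1 N z β * Real.exp (-((1 / N : ℝ) * β))
        = Real.exp (-z)) ∧
    (∀ C : ℕ → ℝ,
      (∑ β ∈ Finset.range (N + 1), C β * Real.exp (-((1 / N : ℝ) * β)) = Real.exp (-z)) →
        Q1 N z (fun β => optC1 N z β) ≤ Q1 N z C ∧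
        (Q1 N z C = Q1 N z (fun β => optC1 N z β) → ∀ β ≤ N, C β = optC1 N z β)) := by
  have hx : StrictMono fun β : ℕ => (1 / N : ℝ) * β :=
    Nat.strictMono_cast.const_mul (by positivity)
  refine ⟨sum_optC1_mul_exp_neg hN hz, fun C hC => ?_⟩
  rw [Q1_eq_Q1_optC1_add hN hz hC]
  refine ⟨le_add_of_nonneg_right (div_nonneg
    (hx.monotone.sum_sum_mul_mul_exp_neg_abs_sub_nonneg _ N) zero_le_two), fun hQ β hβ => ?_⟩
  exact sub_eq_zero.1 <| hx.eq_zero_of_sum_sum_mul_mul_exp_neg_abs_sub_eq_zero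
    (v := fun β => C β - optC1 N z β) (by linarith) β hβ
end

section
/- For every integer N ≥ 1, h = 1/N and every z ∈ [0,1], the coefficients C̊_β(z) also reproduce the exponential e^{x} exactly: Σ_{β=0}^N C̊_β(z) · e^{hβ} = e^{z} (equivalently, the constant D = (1/4)Σ_{γ=0}^N C̊_γ(z) e^{hγ} appearing in the construction equals e^{z}/4). -/
/-!
The coefficient `C̊_β(z)` is `(L k)(hβ) / (2 sinh h)`, where `k(t) = |sinh (z - t)|` and
`(L f)(t) = f(t + h) + f(t - h) - 2 cosh h · f(t)`. Since `L exp = 0`, the discrete Green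
identity turns `∑_β e^{hβ} (L k)(hβ)` into the difference of the Casoratians of `exp` and `k`
at the two ends of the grid. The nodes `-h, 0` lie left of `z` and `1, 1 + h` right of it,
where `k` is a plain `± sinh`, and each Casoratian there equals `± e^z sinh h`.
-/

open Real Finset

noncomputable def centralSecondDiff (h c : ℝ) (f : ℝ → ℝ) (t : ℝ) : ℝ :=
  f (t + h) + f (t - h) - 2 * c * f t

noncomputable def casoratian (h : ℝ) (u k : ℝ → ℝ) (t : ℝ) : ℝ :=
  u t * k (t + h) - u (t + h) * k t

theorem centralSecondDiff_exp (h t : ℝ) : centralSecondDiff h (cosh h) exp t = 0 := by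
  simp only [centralSecondDiff, cosh_eq, exp_add, exp_sub, exp_neg]
  field_simp
  ring

theorem sum_range_mul_centralSecondDiff_sub (h c : ℝ) (u k : ℝ → ℝ) (n : ℕ) :
    ∑ β ∈ range (n + 1),
        (u (h * β) * centralSecondDiff h c k (h * β)
          - k (h * β) * centralSecondDiff h c u (h * β))
      = casoratian h u k (h * n) - casoratian h u k (-h) := by
  have step : ∀ β : ℕ,
      u (h * β) * centralSecondDiff h c k (h * β) - k (h * β) * centralSecondDiff h c u (h * β)
        = casoratian h u k (h * ↑(β + 1) - h) - casoratian h u k (h * β - h) := by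
    intro β
    simp only [centralSecondDiff, casoratian, Nat.cast_succ, mul_add_one, add_sub_cancel_right,
      sub_add_cancel]
    ring
  rw [sum_congr rfl fun β _ => step β, sum_range_sub (fun β => casoratian h u k (h * β - h))]
  simp [mul_add_one]

theorem sign_mul_exp_add_sub_exp_sub (a w : ℝ) :
    Real.sign w * (exp (a + w) - exp (a - w)) = 2 * exp a * |sinh w| := by
  have hsinh : exp (a + w) - exp (a - w) = 2 * exp a * sinh w := by
    rw [sinh_eq, exp_add, exp_sub, exp_neg]
    field_simp
  rw [hsinh]
  rcases lt_trichotomy w 0 with hw | rfl | hw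
  · rw [Real.sign_of_neg hw, abs_of_neg (sinh_neg_iff.2 hw)]
    ring
  · simp
  · rw [Real.sign_of_pos hw, abs_of_pos (sinh_pos_iff.2 hw)]
    ring

theorem optC1_eq_centralSecondDiff (N : ℕ) (z : ℝ) (β : ℕ) :
    optC1 N z β = centralSecondDiff (1 / N) (cosh (1 / N)) (fun t => |sinh (z - t)|)
      (1 / N * β) / (2 * sinh (1 / N)) := by
  set h : ℝ := 1 / N
  set t : ℝ := h * β
  have left := sign_mul_exp_add_sub_exp_sub h (z - t - h)
  have right := sign_mul_exp_add_sub_exp_sub h (z - t + h)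
  have centre := sign_mul_exp_add_sub_exp_sub 0 (z - t)
  rw [show h + (z - t - h) = z - t by ring, show h - (z - t - h) = t + 2 * h - z by ring]
    at left
  rw [show h + (z - t + h) = z - t + 2 * h by ring, show h - (z - t + h) = t - z by ring]
    at right
  rw [zero_add, zero_sub, neg_sub, exp_zero] at centre
  have hcosh : exp h * (2 * cosh h) = 1 + exp (2 * h) := by
    rw [cosh_eq, two_mul h, exp_add, exp_neg]
    field_simp
    ring
  have hsinh : 2 * (1 - exp (2 * h)) = -2 * exp h * (2 * sinh h) := by
    rw [sinh_eq, two_mul h, exp_add, exp_neg]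
    field_simp
    ring
  have bracket :
      Real.sign (z - t - h) * (exp (t + 2 * h - z) - exp (z - t))
        + Real.sign (z - t + h) * (exp (t - z) - exp (z - t + 2 * h))
        + (1 + exp (2 * h)) * Real.sign (z - t) * (exp (z - t) - exp (t - z))
      = -2 * exp h * centralSecondDiff h (cosh h) (fun s => |sinh (z - s)|) t := by
    simp only [centralSecondDiff]
    rw [show z - (t + h) = z - t - h by ring, show z - (t - h) = z - t + h by ring]
    linear_combination -left - right + (1 + exp (2 * h)) * centre
      - 2 * |sinh (z - t)| * hcosh
  simp only [optC1]
  have hne : -2 * exp h ≠ 0 := by simp [exp_ne_zero]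
  rw [bracket, hsinh, one_div_mul_eq_div, mul_div_mul_left _ _ hne]

theorem casoratian_exp_abs_sinh_of_le {h z t : ℝ} (hh : 0 ≤ h) (hzt : z ≤ t) :
    casoratian h exp (fun s => |sinh (z - s)|) t = exp z * sinh h := by
  simp only [casoratian]
  rw [abs_of_nonpos (sinh_nonpos_iff.2 (by linarith)),
    abs_of_nonpos (sinh_nonpos_iff.2 (by linarith))]
  simp only [sinh_eq, exp_add, exp_sub, exp_neg]
  field_simp
  ring

theorem casoratian_exp_abs_sinh_of_add_le {h z t : ℝ} (hh : 0 ≤ h) (hzt : t + h ≤ z) :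
    casoratian h exp (fun s => |sinh (z - s)|) t = -(exp z * sinh h) := by
  simp only [casoratian]
  rw [abs_of_nonneg (sinh_nonneg_iff.2 (by linarith)),
    abs_of_nonneg (sinh_nonneg_iff.2 (by linarith))]
  simp only [sinh_eq, exp_add, exp_sub, exp_neg]
  field_simp
  ring

/-- For every `N ≥ 1`, `h = 1/N` and every `z ∈ [0,1]`, the optimal coefficients also
reproduce the exponential `e^{x}` exactly: `Σ_{β=0}^N C̊_β(z)·e^{hβ} = e^{z}`
(equivalently, the constant `D = (1/4)·Σ_γ C̊_γ(z) e^{hγ}` of the construction equals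
`e^z/4`). -/
theorem optC1_reproduces_exp_pos (N : ℕ) (hN : 1 ≤ N) (z : ℝ)
    (hz : z ∈ Set.Icc (0 : ℝ) 1) :
    (∑ β ∈ Finset.range (N + 1), optC1 N z β * Real.exp ((1 / N : ℝ) * β)
        = Real.exp z) ∧
    1 / 4 * (∑ γ ∈ Finset.range (N + 1), optC1 N z γ * Real.exp ((1 / N : ℝ) * γ))
      = Real.exp z / 4 := by
  set h : ℝ := 1 / N
  set k : ℝ → ℝ := fun s => |sinh (z - s)|
  have hh : 0 < h := by positivity
  have hhN : h * N = 1 := by simp [h, (by positivity : (N : ℝ) ≠ 0)]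
  have hsum : ∑ β ∈ range (N + 1), optC1 N z β * exp (h * β) = exp z :=
    calc ∑ β ∈ range (N + 1), optC1 N z β * exp (h * β)
        = (∑ β ∈ range (N + 1), (exp (h * β) * centralSecondDiff h (cosh h) k (h * β)
            - k (h * β) * centralSecondDiff h (cosh h) exp (h * β))) / (2 * sinh h) := by
          simp only [optC1_eq_centralSecondDiff, centralSecondDiff_exp, mul_zero, sub_zero,
            sum_div]
          exact sum_congr rfl fun β _ => by ring
      _ = (casoratian h exp k 1 - casoratian h exp k (-h)) / (2 * sinh h) := by
          rw [sum_range_mul_centralSecondDiff_sub, hhN]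
      _ = exp z := by
          rw [casoratian_exp_abs_sinh_of_le hh.le hz.2,
            casoratian_exp_abs_sinh_of_add_le hh.le (by linarith [hz.1])]
          field_simp [(sinh_pos_iff.2 hh).ne']
          ring
  exact ⟨hsum, by rw [hsum]; ring⟩
end

section
/- For every integer N ≥ 1, h = 1/N and all β, γ ∈ {0,1,…,N}, the coefficients of the optimal interpolation formula in W_2^{(1,0)}(0,1) satisfy the interpolation (cardinality) property C̊_β(hγ) = δ_{βγ}, where δ_{βγ} is the Kronecker symbol. -/
lemma brkt0 (u a : ℝ) :
    (Real.exp (2*u - a) - Real.exp a) + (Real.exp (-a) - Real.exp (a + 2*u)) +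
      (1 + Real.exp (2*u)) * (Real.exp a - Real.exp (-a)) = 0 := by
  rw [Real.exp_sub, Real.exp_add, Real.exp_neg]
  have h1 := (Real.exp_pos a).ne'
  field_simp
  ring


/-- For every `N ≥ 1`, `h = 1/N` and all `β, γ ∈ {0,…,N}`, the coefficients of the
optimal interpolation formula in `W₂^{(1,0)}(0,1)` satisfy the cardinality property
`C̊_β(hγ) = δ_{βγ}` (Kronecker symbol). -/
theorem optC1_cardinality (N : ℕ) (hN : 1 ≤ N) (β γ : ℕ) (hβ : β ≤ N) (hγ : γ ≤ N) :
    optC1 N ((1 / N : ℝ) * γ) β = if β = γ then 1 else 0 := by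
  have hN0 : (0:ℝ) < N := by exact_mod_cast hN
  simp only [optC1]
  set h : ℝ := 1 / N with hh
  have hpos : 0 < h := by positivity
  have hE1 : (1:ℝ) - Real.exp (2*h) ≠ 0 := by
    have : 1 < Real.exp (2*h) := by
      rw [Real.one_lt_exp_iff]
      positivity
    linarith
  set a : ℝ := h * γ - h * β with ha
  rw [show h*↑β + 2*h - h*↑γ = 2*h - a by rw [ha]; ring,
      show h*↑β - h*↑γ = -a by rw [ha]; ring]
  rcases lt_trichotomy β γ with hlt | heq | hgt
  · -- β < γ : result 0
    rw [if_neg (Nat.ne_of_lt hlt)]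
    have hba : (↑β:ℝ) + 1 ≤ ↑γ := by exact_mod_cast hlt
    have hha : h ≤ a := by rw [ha]; nlinarith
    have h2 : 0 < a + h := by linarith
    have h3 : 0 < a := by linarith
    rcases eq_or_lt_of_le hha with hah | hah
    · have hT1 : Real.exp (2*h - a) - Real.exp a = 0 := by
        rw [show 2*h - a = a by rw [← hah]; ring]; ring
      rw [show a - h = 0 by rw [← hah]; ring, Real.sign_zero,
          Real.sign_of_pos h2, Real.sign_of_pos h3]
      linear_combination (1/(2*(1-Real.exp (2*h)))) * brkt0 h a
        - (1/(2*(1-Real.exp (2*h)))) * hT1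
    · rw [Real.sign_of_pos (by linarith : (0:ℝ) < a - h),
          Real.sign_of_pos h2, Real.sign_of_pos h3]
      linear_combination (1/(2*(1-Real.exp (2*h)))) * brkt0 h a
  · -- β = γ : result 1
    rw [if_pos heq]
    have ha0 : a = 0 := by rw [ha, heq]; ring
    rw [ha0, Real.sign_zero, show (0:ℝ) - h = -h by ring, show (0:ℝ) + h = h by ring,
        Real.sign_of_neg (by linarith : -h < 0), Real.sign_of_pos hpos,
        show 2*h - 0 = 2*h by ring, neg_zero, Real.exp_zero, show (0:ℝ) + 2*h = 2*h by ring]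
    field_simp
    ring
  · -- γ < β : result 0
    rw [if_neg (Nat.ne_of_gt hgt)]
    have hba : (↑γ:ℝ) + 1 ≤ ↑β := by exact_mod_cast hgt
    have hha : a ≤ -h := by rw [ha]; nlinarith
    have h1 : a - h < 0 := by linarith
    have h3 : a < 0 := by linarith
    rcases eq_or_lt_of_le hha with hah | hah
    · have hT2 : Real.exp (-a) - Real.exp (a + 2*h) = 0 := by
        rw [show a + 2*h = -a by rw [hah]; ring]; ring
      rw [show a + h = 0 by rw [hah]; ring, Real.sign_zero,
          Real.sign_of_neg h1, Real.sign_of_neg h3]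
      linear_combination (-(1/(2*(1-Real.exp (2*h))))) * brkt0 h a
        + (1/(2*(1-Real.exp (2*h)))) * hT2
    · rw [Real.sign_of_neg (by linarith : a + h < 0),
          Real.sign_of_neg h1, Real.sign_of_neg h3]
      linear_combination (-(1/(2*(1-Real.exp (2*h))))) * brkt0 h a
end
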